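/- arXiv:1810.11331 — 3 statements merged into one kernel-verified Lean document; each statement's English description precedes it below -/
import Mathlib

section
/- Let ρ be a critical radius function on ℝ^d. Then there exists a sequence of points {x_j}_{j∈ℕ} in ℝ^d such that the critical balls Q_j = B(x_j, ρ(x_j)) satisfy: (i) ⋃_{j∈ℕ} Q_j = ℝ^d; and (ii) there exist constants C and N₁ (depending only on d and the constants of ρ) such that for every σ ≥ 1 and every x ∈ ℝ^d, Σ_{j∈ℕ} χ_{σQ_j}(x) ≤ C σ^{N₁}, where σQ_j = B(x_j, σρ(x_j)). -/
open MeasureTheory Metric Set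
open scoped ENNReal NNReal

noncomputable section

/-- Euclidean space ℝ^d. -/
abbrev Euc (d : ℕ) := EuclideanSpace ℝ (Fin d)

/-- A Young function: continuous, convex, increasing, vanishing at 0, nonnegative on `[0,∞)`. -/
structure IsYoung (A : ℝ → ℝ) : Prop where
  continuous : ContinuousOn A (Ici 0)
  convex : ConvexOn ℝ (Ici 0) A
  mono : MonotoneOn A (Ici 0)
  zero : A 0 = 0
  nonneg : ∀ t, 0 ≤ t → 0 ≤ A t

/-- The Luxemburg average `‖f‖_{A,B(c,r)}`. -/
def luxAvg {d : ℕ} (A : ℝ → ℝ) (f : Euc d → ℝ) (c : Euc d) (r : ℝ) : ℝ :=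
  sInf {lam : ℝ | 0 < lam ∧
    (∫ t in ball c r, A (|f t| / lam)) ≤ (volume (ball c r)).toReal}

/-- The Orlicz maximal operator `M_A`. -/
def orliczMax {d : ℕ} (A : ℝ → ℝ) (f : Euc d → ℝ) (x : Euc d) : ℝ≥0∞ :=
  ⨆ (c : Euc d) (r : ℝ) (_ : x ∈ ball c r), ENNReal.ofReal (luxAvg A f c r)

/-- The local Orlicz maximal operator `M_A^{loc}` (over sub-critical balls). -/
def orliczMaxLoc {d : ℕ} (ρ : Euc d → ℝ) (A : ℝ → ℝ) (f : Euc d → ℝ) (x : Euc d) : ℝ≥0∞ :=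
  ⨆ (c : Euc d) (r : ℝ) (_ : x ∈ ball c r ∧ r ≤ ρ c), ENNReal.ofReal (luxAvg A f c r)

/-- The maximal operator `M_A^θ`. -/
def orliczMaxTheta {d : ℕ} (ρ : Euc d → ℝ) (θ : ℝ) (A : ℝ → ℝ) (f : Euc d → ℝ)
    (x : Euc d) : ℝ≥0∞ :=
  ⨆ (c : Euc d) (r : ℝ) (_ : x ∈ ball c r),
    ENNReal.ofReal ((1 + r / ρ c) ^ (-θ) * luxAvg A f c r)

/-- The maximal operator `M_r^θ` of `r`-power averages. -/
def powMaxTheta {d : ℕ} (ρ : Euc d → ℝ) (r θ : ℝ) (w : Euc d → ℝ) (x : Euc d) : ℝ≥0∞ :=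
  ⨆ (c : Euc d) (s : ℝ) (_ : x ∈ ball c s),
    ENNReal.ofReal ((1 + s / ρ c) ^ (-θ) *
      ((∫ y in ball c s, w y ^ r) / (volume (ball c s)).toReal) ^ (1 / r))

/-- The maximal operator `M^θ` of plain averages. -/
def avgMaxTheta {d : ℕ} (ρ : Euc d → ℝ) (θ : ℝ) (w : Euc d → ℝ) (x : Euc d) : ℝ≥0∞ :=
  ⨆ (c : Euc d) (s : ℝ) (_ : x ∈ ball c s),
    ENNReal.ofReal ((1 + s / ρ c) ^ (-θ) *
      ((∫ y in ball c s, w y) / (volume (ball c s)).toReal))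

/-- The class `D_p` of Young functions: `∫_c^∞ (t/A(t))^{p'-1} dt/t < ∞` for some `c > 0`,
where `p' = p/(p-1)`. -/
def InDp (A : ℝ → ℝ) (p : ℝ) : Prop :=
  ∃ c > (0:ℝ), IntegrableOn (fun t => (t / A t) ^ (p / (p - 1) - 1) / t) (Ici c)

/-- A weight: a nonnegative locally integrable function. -/
def IsWeight {d : ℕ} (w : Euc d → ℝ) : Prop :=
  (∀ x, 0 ≤ w x) ∧ LocallyIntegrable w volume

/-- Bounded measurable functions with compact support. -/
def BddCompSupp {d : ℕ} (f : Euc d → ℝ) : Prop :=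
  Measurable f ∧ (∃ M, ∀ x, |f x| ≤ M) ∧ HasCompactSupport f

/-- A Calderón–Zygmund operator with kernel `K`. -/
structure IsCZO (d : ℕ) (T : (Euc d → ℝ) → Euc d → ℝ) (K : Euc d → Euc d → ℝ) : Prop where
  add : ∀ f g, T (f + g) = T f + T g
  smul : ∀ (a : ℝ) (f), T (a • f) = a • T f
  l2bdd : ∃ C > (0:ℝ), ∀ f : Euc d → ℝ, MemLp f 2 volume →
    MemLp (T f) 2 volume ∧ eLpNorm (T f) 2 volume ≤ ENNReal.ofReal C * eLpNorm f 2 volume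
  meas_kernel : Measurable (Function.uncurry K)
  repr : ∀ f, BddCompSupp f →
    ∀ᵐ x ∂volume, x ∉ tsupport f → T f x = ∫ y, K x y * f y
  kernel_bounds : ∃ C > (0:ℝ), ∃ δ₀ : ℝ, 0 < δ₀ ∧ δ₀ ≤ 1 ∧
    (∀ x y, x ≠ y → |K x y| ≤ C * dist x y ^ (-(d : ℝ))) ∧
    (∀ x x' y, x ≠ y → x' ≠ y → 2 * dist x x' ≤ dist x y →
      |K x y - K x' y| + |K y x - K y x'| ≤
        C * dist x x' ^ δ₀ * dist x y ^ (-(d : ℝ) - δ₀))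

/-- A critical radius function with constants `C₀`, `N₀`. -/
def IsCriticalRadius {d : ℕ} (ρ : Euc d → ℝ) (C₀ N₀ : ℝ) : Prop :=
  0 < C₀ ∧ 1 ≤ N₀ ∧ (∀ x, 0 < ρ x) ∧
  ∀ x y : Euc d,
    C₀⁻¹ * ρ x * (1 + dist x y / ρ x) ^ (-N₀) ≤ ρ y ∧
    ρ y ≤ C₀ * ρ x * (1 + dist x y / ρ x) ^ (N₀ / (N₀ + 1))

/-- The annulus `{x : R < |x - x₀| < 2R}`. -/
def annulus {d : ℕ} (x₀ : Euc d) (R : ℝ) : Set (Euc d) :=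
  {x | R < dist x x₀ ∧ dist x x₀ < 2 * R}

/-- Condition `(a_s)`. -/
def CondAs {d : ℕ} (ρ : Euc d → ℝ) (s : ℝ) (K : Euc d → Euc d → ℝ) : Prop :=
  ∀ N > (0:ℝ), ∃ C > (0:ℝ), ∀ (x₀ y : Euc d) (R : ℝ), 0 < R → dist y x₀ < R / 2 →
    (∫ x in annulus x₀ R, |K x y| ^ s) ^ (1 / s) ≤
      C * R ^ (-((d : ℝ) / (s / (s - 1)))) * (1 + R / ρ x₀) ^ (-N)

/-- Condition `(a'_s)`. -/
def CondAs' {d : ℕ} (ρ : Euc d → ℝ) (s : ℝ) (K : Euc d → Euc d → ℝ) : Prop :=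
  ∀ N > (0:ℝ), ∃ C > (0:ℝ), ∀ (x₀ y : Euc d) (R : ℝ), 0 < R →
    R < dist y x₀ → dist y x₀ < 2 * R →
    (∫ x in ball x₀ (R / 2), |K x y| ^ s) ^ (1 / s) ≤
      C * R ^ (-((d : ℝ) / (s / (s - 1)))) * (1 + R / ρ x₀) ^ (-N)

/-- Condition `(b_s)` for the kernel `Q` (typically `Q = K - K₀`). -/
def CondBs {d : ℕ} (ρ : Euc d → ℝ) (s : ℝ) (Q : Euc d → Euc d → ℝ) : Prop :=
  ∃ C > (0:ℝ), ∃ δ > (0:ℝ), ∀ (x₀ y : Euc d) (R : ℝ), 0 < R → R ≤ ρ x₀ →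
    dist y x₀ < R / 2 →
    (∫ x in annulus x₀ R, |Q x y| ^ s) ^ (1 / s) ≤
      C * R ^ (-((d : ℝ) / (s / (s - 1)))) * (R / ρ x₀) ^ δ

/-- Condition `(b'_s)` for the kernel `Q`. -/
def CondBs' {d : ℕ} (ρ : Euc d → ℝ) (s : ℝ) (Q : Euc d → Euc d → ℝ) : Prop :=
  ∃ C > (0:ℝ), ∃ ε > (0:ℝ), ∀ (x₀ y : Euc d) (R : ℝ), 0 < R → R ≤ ρ x₀ →
    R < dist y x₀ → dist y x₀ < 2 * R →
    (∫ x in ball x₀ (R / 2), |Q x y| ^ s) ^ (1 / s) ≤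
      C * R ^ (-((d : ℝ) / (s / (s - 1)))) * (R / ρ x₀) ^ ε

/-- Condition `(c_s)`. -/
def CondCs {d : ℕ} (ρ : Euc d → ℝ) (s : ℝ) (K : Euc d → Euc d → ℝ) : Prop :=
  ∃ δ > (0:ℝ), ∀ N > (0:ℝ), ∃ C > (0:ℝ), ∀ (x₀ y : Euc d) (R : ℝ), 0 < R →
    dist y x₀ < R / 2 →
    (∫ x in annulus x₀ R, |K x y| ^ s) ^ (1 / s) ≤
      C * R ^ (-((d : ℝ) / (s / (s - 1)))) * (1 + ρ x₀ / R) ^ (-δ) * (1 + R / ρ x₀) ^ (-N)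

/-- Pointwise size condition `(a_∞)`. -/
def CondAinfty {d : ℕ} (ρ : Euc d → ℝ) (K : Euc d → Euc d → ℝ) : Prop :=
  ∀ N > (0:ℝ), ∃ C > (0:ℝ), ∀ x y : Euc d, x ≠ y →
    |K x y| ≤ C * dist x y ^ (-(d : ℝ)) * (1 + dist x y / ρ x) ^ (-N)

/-- Pointwise comparison condition `(b_∞)` for `Q = K - K₀`. -/
def CondBinfty {d : ℕ} (ρ : Euc d → ℝ) (Q : Euc d → Euc d → ℝ) : Prop :=
  ∃ C > (0:ℝ), ∃ δ > (0:ℝ), ∀ x y : Euc d, x ≠ y →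
    |Q x y| ≤ C * dist x y ^ (-(d : ℝ)) * (dist x y / ρ y) ^ δ

/-!
Take a maximal family of points whose shrunken critical balls `B(p, c ρ(p) / 4)` are pairwise
disjoint, where `c = C₀⁻¹ 2^(-N₀)` is the factor by which `ρ` can drop inside a critical ball.
Maximality and this comparability make the critical balls `B(p, ρ(p))` cover; disjointness makes
the family countable, and it is infinite because `ℝ^d` is unbounded. If `z ∈ B(p, σ ρ(p))`, the
critical radius bounds give `|z - p| ≲ A ρ(z)` and `A^(-N₀) ρ(z) ≲ ρ(p) ≲ A ρ(z)` with
`A = (1 + σ C₀)^(N₀+1)`, so the disjoint shrunken balls around such `p` lie in a ball of radius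
`≲ A ρ(z)` and have radius `≳ A^(-N₀) ρ(z)`. Comparing volumes bounds their number by
`≲ A^(d (N₀+1)) ≲ σ^(d (N₀+1)^2)`.
-/

open Function Finset Module TopologicalSpace

theorem Set.Countable.exists_injective_range_eq {α : Type*} {s : Set α} (hc : s.Countable)
    (hi : s.Infinite) : ∃ e : ℕ → α, Injective e ∧ range e = s := by
  have := hc.to_subtype
  have := hi.to_subtype
  obtain ⟨_⟩ := nonempty_denumerable s
  refine ⟨Subtype.val ∘ (Denumerable.eqv s).symm,
    Subtype.val_injective.comp (Equiv.injective _), ?_⟩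
  rw [range_comp, Equiv.range_eq_univ, image_univ, Subtype.range_coe]

theorem tsum_indicator_one_le_ofReal {ι X : Type*} (s : ι → Set X) (z : X) {M : ℝ}
    (h : ∀ F : Finset ι, (∀ j ∈ F, z ∈ s j) → (#F : ℝ) ≤ M) :
    ∑' j, (s j).indicator (fun _ => (1 : ℝ≥0∞)) z ≤ ENNReal.ofReal M := by
  classical
  refine ENNReal.summable.tsum_le_of_sum_le fun F => ?_
  have hF := h (F.filter fun j => z ∈ s j) fun j hj => (Finset.mem_filter.1 hj).2
  calc ∑ j ∈ F, (s j).indicator (fun _ => (1 : ℝ≥0∞)) z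
      = ENNReal.ofReal (#(F.filter fun j => z ∈ s j) : ℝ) := by
        simp [Set.indicator_apply, Finset.sum_boole]
    _ ≤ ENNReal.ofReal M := ENNReal.ofReal_le_ofReal hF

theorem exists_maximal_pairwiseDisjoint {α β : Type*} (f : α → Set β) :
    ∃ S : Set α, Maximal (fun T : Set α => T.PairwiseDisjoint f) S := by
  refine zorn_subset _ fun c hcS hchain => ⟨⋃₀ c, ?_, fun s hs => subset_sUnion_of_mem hs⟩
  rintro a ⟨s, hs, has⟩ b ⟨t, ht, hbt⟩ hab
  rcases hchain.total hs ht with h | h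
  · exact hcS ht (h has) hbt hab
  · exact hcS hs has (h hbt) hab

theorem exists_pairwiseDisjoint_ball_covering {X : Type*} [MetricSpace X] {r : X → ℝ} {c : ℝ}
    (hr : ∀ x, 0 < r x) (hrc : ∀ z x, dist z x ≤ r z → c * r z ≤ r x) :
    ∃ S : Set X, S.PairwiseDisjoint (fun p => ball p (c / 4 * r p)) ∧
      ∀ z, ∃ p ∈ S, dist z p < r p := by
  obtain ⟨S, hS⟩ := exists_maximal_pairwiseDisjoint fun p => ball p (c / 4 * r p)
  refine ⟨S, hS.prop, fun z => ?_⟩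
  by_cases hz : z ∈ S
  · exact ⟨z, hz, by simpa using hr z⟩
  have hc : c ≤ 1 := by
    have := hrc z z (by simpa using (hr z).le)
    nlinarith [hr z]
  have hins : ¬ (insert z S).PairwiseDisjoint (fun p => ball p (c / 4 * r p)) :=
    fun h => hz (hS.2 h (subset_insert z S) (mem_insert z S))
  rw [pairwiseDisjoint_insert] at hins
  push Not at hins
  obtain ⟨p, hpS, -, hzp⟩ := hins hS.prop
  obtain ⟨w, hwz, hwp⟩ := Set.not_disjoint_iff.1 hzp
  have hdist : dist z p < c / 4 * r z + c / 4 * r p :=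
    (dist_triangle z w p).trans_lt (add_lt_add (mem_ball'.1 hwz) (mem_ball.1 hwp))
  refine ⟨p, hpS, ?_⟩
  have hz0 := hr z
  have hp0 := hr p
  rcases le_total (r z) (r p) with hzp | hpz
  · nlinarith
  · have := hrc z p (by nlinarith)
    nlinarith

theorem exists_seq_pairwise_disjoint_ball_covering {E : Type*} [NormedAddCommGroup E]
    [NormedSpace ℝ E] [Nontrivial E] [SeparableSpace E] {r : E → ℝ} {c : ℝ}
    (hr : ∀ x, 0 < r x) (hc : 0 < c) (hrc : ∀ z x, dist z x ≤ r z → c * r z ≤ r x) :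
    ∃ e : ℕ → E, Pairwise (Disjoint on fun j => ball (e j) (c / 4 * r (e j))) ∧
      ⋃ j, ball (e j) (r (e j)) = univ := by
  obtain ⟨S, hdisj, hcover⟩ := exists_pairwiseDisjoint_ball_covering hr hrc
  have hunion : ⋃ p ∈ S, ball p (r p) = univ :=
    eq_univ_of_forall fun z => by
      obtain ⟨p, hp, hzp⟩ := hcover z
      exact mem_biUnion hp (mem_ball.2 hzp)
  have hcount : S.Countable :=
    hdisj.countable_of_isOpen (fun _ _ => isOpen_ball) fun p _ => nonempty_ball.2 (by
      have := hr p; positivity)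
  have hinf : S.Infinite := fun hfin => NormedSpace.unbounded_univ ℝ E <| by
    rw [← hunion]
    exact (Bornology.isBounded_biUnion hfin).2 fun _ _ => isBounded_ball
  obtain ⟨e, he, rfl⟩ := hcount.exists_injective_range_eq hinf
  refine ⟨e, fun i j hij => hdisj (mem_range_self i) (mem_range_self j) (he.ne hij), ?_⟩
  rwa [biUnion_range] at hunion

theorem card_mul_pow_le_of_pairwiseDisjoint_ball {E ι : Type*} [NormedAddCommGroup E]
    [NormedSpace ℝ E] [FiniteDimensional ℝ E] (F : Finset ι) {c : ι → E} {r : ι → ℝ}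
    (hdisj : (F : Set ι).PairwiseDisjoint fun i => ball (c i) (r i)) {z : E} {R r₀ : ℝ}
    (hR : 0 < R) (hr₀ : 0 < r₀) (hr : ∀ i ∈ F, r₀ ≤ r i)
    (hsub : ∀ i ∈ F, ball (c i) (r i) ⊆ ball z R) :
    (#F : ℝ) * r₀ ^ finrank ℝ E ≤ R ^ finrank ℝ E := by
  let _ : MeasurableSpace E := borel E
  have _ : BorelSpace E := ⟨rfl⟩
  set μ : Measure E := Measure.addHaar
  have hμ0 : μ (ball 0 1) ≠ 0 := (measure_ball_pos _ _ one_pos).ne'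
  have hμtop : μ (ball 0 1) ≠ ⊤ := measure_ball_lt_top.ne
  have key : (#F : ℝ≥0∞) * (ENNReal.ofReal (r₀ ^ finrank ℝ E) * μ (ball 0 1)) ≤
      ENNReal.ofReal (R ^ finrank ℝ E) * μ (ball 0 1) := by
    calc (#F : ℝ≥0∞) * (ENNReal.ofReal (r₀ ^ finrank ℝ E) * μ (ball 0 1))
        = ∑ i ∈ F, μ (ball (c i) r₀) := by
          simp [Measure.addHaar_ball_of_pos μ _ hr₀]
      _ ≤ ∑ i ∈ F, μ (ball (c i) (r i)) :=
          Finset.sum_le_sum fun i hi => measure_mono (ball_subset_ball (hr i hi))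
      _ = μ (⋃ i ∈ F, ball (c i) (r i)) :=
          (measure_biUnion_finset hdisj fun _ _ => measurableSet_ball).symm
      _ ≤ μ (ball z R) := measure_mono (iUnion₂_subset hsub)
      _ = ENNReal.ofReal (R ^ finrank ℝ E) * μ (ball 0 1) := Measure.addHaar_ball_of_pos μ _ hR
  rw [← mul_assoc, ENNReal.mul_le_mul_iff_left hμ0 hμtop, ← ENNReal.ofReal_natCast,
    ← ENNReal.ofReal_mul (Nat.cast_nonneg _)] at key
  exact (ENNReal.ofReal_le_ofReal_iff (by positivity)).1 key

namespace IsCriticalRadius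

variable {d : ℕ} {ρ : Euc d → ℝ} {C₀ N₀ : ℝ}

theorem const_pos (hρ : IsCriticalRadius ρ C₀ N₀) : 0 < C₀ := hρ.1

theorem one_le_exponent (hρ : IsCriticalRadius ρ C₀ N₀) : 1 ≤ N₀ := hρ.2.1

theorem pos (hρ : IsCriticalRadius ρ C₀ N₀) (x : Euc d) : 0 < ρ x := hρ.2.2.1 x

theorem lower_le (hρ : IsCriticalRadius ρ C₀ N₀) (x y : Euc d) :
    C₀⁻¹ * ρ x * (1 + dist x y / ρ x) ^ (-N₀) ≤ ρ y := (hρ.2.2.2 x y).1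

theorem le_upper (hρ : IsCriticalRadius ρ C₀ N₀) (x y : Euc d) :
    ρ y ≤ C₀ * ρ x * (1 + dist x y / ρ x) ^ (N₀ / (N₀ + 1)) := (hρ.2.2.2 x y).2

theorem one_le_const (hρ : IsCriticalRadius ρ C₀ N₀) : 1 ≤ C₀ := by
  have h := hρ.lower_le 0 0
  simp only [dist_self, zero_div, add_zero, Real.one_rpow, mul_one] at h
  rwa [inv_mul_le_iff₀ hρ.const_pos, le_mul_iff_one_le_left (hρ.pos 0)] at h

theorem mul_le_of_dist_le (hρ : IsCriticalRadius ρ C₀ N₀) {z x : Euc d}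
    (h : dist z x ≤ ρ z) : C₀⁻¹ * 2 ^ (-N₀) * ρ z ≤ ρ x := by
  have := hρ.const_pos
  have := hρ.one_le_exponent
  have hz := hρ.pos z
  have hu : 1 + dist z x / ρ z ≤ 2 := by
    have : dist z x / ρ z ≤ 1 := (div_le_one hz).2 h
    linarith
  calc C₀⁻¹ * 2 ^ (-N₀) * ρ z = C₀⁻¹ * ρ z * 2 ^ (-N₀) := by ring
    _ ≤ C₀⁻¹ * ρ z * (1 + dist z x / ρ z) ^ (-N₀) := by
        refine mul_le_mul_of_nonneg_left ?_ (by positivity)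
        exact Real.rpow_le_rpow_of_nonpos (by positivity) hu (by linarith)
    _ ≤ ρ x := hρ.lower_le z x

/-- The exponent `N₀/(N₀+1) < 1` in the upper bound for `ρ` is what lets this self-improving
estimate close. -/
theorem one_add_dist_div_le (hρ : IsCriticalRadius ρ C₀ N₀) {σ : ℝ} (hσ : 0 ≤ σ)
    {z x : Euc d} (h : dist z x < σ * ρ x) :
    1 + dist z x / ρ z ≤ (1 + σ * C₀) ^ (N₀ + 1) := by
  have := hρ.const_pos
  have := hρ.one_le_exponent
  have hz := hρ.pos z
  set u := 1 + dist z x / ρ z with hu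
  have hu1 : 1 ≤ u := le_add_of_nonneg_right (by positivity)
  have huα : 1 ≤ u ^ (N₀ / (N₀ + 1)) := Real.one_le_rpow hu1 (by positivity)
  have hdist : dist z x = (u - 1) * ρ z := by rw [hu]; field_simp; ring
  have hgrow : u ≤ (1 + σ * C₀) * u ^ (N₀ / (N₀ + 1)) := by
    have : (u - 1) * ρ z < σ * C₀ * u ^ (N₀ / (N₀ + 1)) * ρ z := by
      rw [← hdist]
      calc dist z x < σ * ρ x := h
        _ ≤ σ * (C₀ * ρ z * u ^ (N₀ / (N₀ + 1))) :=
            mul_le_mul_of_nonneg_left (hρ.le_upper z x) hσ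
        _ = σ * C₀ * u ^ (N₀ / (N₀ + 1)) * ρ z := by ring
    have := lt_of_mul_lt_mul_right this hz.le
    nlinarith
  have hsplit : u ^ (N₀ + 1)⁻¹ * u ^ (N₀ / (N₀ + 1)) = u := by
    have : (N₀ + 1)⁻¹ + N₀ / (N₀ + 1) = 1 := by field_simp; ring
    rw [← Real.rpow_add (by linarith), this, Real.rpow_one]
  have hroot : u ^ (N₀ + 1)⁻¹ ≤ 1 + σ * C₀ :=
    le_of_mul_le_mul_right (by rw [hsplit]; exact hgrow) (by linarith)
  exact (Real.rpow_inv_le_iff_of_pos (by linarith) (by positivity) (by linarith)).1 hroot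

theorem mul_rpow_neg_le_of_dist_lt (hρ : IsCriticalRadius ρ C₀ N₀) {σ : ℝ} (hσ : 0 ≤ σ)
    {z x : Euc d} (h : dist z x < σ * ρ x) :
    C₀⁻¹ * ((1 + σ * C₀) ^ (N₀ + 1)) ^ (-N₀) * ρ z ≤ ρ x := by
  have := hρ.const_pos
  have := hρ.one_le_exponent
  have hz := hρ.pos z
  calc C₀⁻¹ * ((1 + σ * C₀) ^ (N₀ + 1)) ^ (-N₀) * ρ z
      = C₀⁻¹ * ρ z * ((1 + σ * C₀) ^ (N₀ + 1)) ^ (-N₀) := by ring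
    _ ≤ C₀⁻¹ * ρ z * (1 + dist z x / ρ z) ^ (-N₀) := by
        refine mul_le_mul_of_nonneg_left ?_ (by positivity)
        exact Real.rpow_le_rpow_of_nonpos (by positivity) (hρ.one_add_dist_div_le hσ h)
          (by linarith)
    _ ≤ ρ x := hρ.lower_le z x

theorem ball_subset_of_dist_lt (hρ : IsCriticalRadius ρ C₀ N₀) {σ : ℝ} (hσ : 0 ≤ σ)
    {z x : Euc d} (h : dist z x < σ * ρ x) :
    ball x (C₀⁻¹ * ρ x) ⊆ ball z (2 * (1 + σ * C₀) ^ (N₀ + 1) * ρ z) := by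
  have hC₀ := hρ.const_pos
  have := hρ.one_le_exponent
  have hz := hρ.pos z
  set A := (1 + σ * C₀) ^ (N₀ + 1)
  have hA : 1 + dist z x / ρ z ≤ A := hρ.one_add_dist_div_le hσ h
  have hdist : dist z x ≤ (A - 1) * ρ z := (div_le_iff₀ hz).1 (by linarith)
  have hx : C₀⁻¹ * ρ x ≤ A * ρ z := by
    have hu1 : 1 ≤ 1 + dist z x / ρ z := le_add_of_nonneg_right (by positivity)
    have hα : N₀ / (N₀ + 1) ≤ 1 := (div_le_one (by linarith)).2 (by linarith)
    rw [inv_mul_le_iff₀ hC₀]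
    calc ρ x ≤ C₀ * ρ z * (1 + dist z x / ρ z) ^ (N₀ / (N₀ + 1)) := hρ.le_upper z x
      _ ≤ C₀ * ρ z * (1 + dist z x / ρ z) ^ (1 : ℝ) := by gcongr
      _ ≤ C₀ * ρ z * A := by rw [Real.rpow_one]; gcongr
      _ = C₀ * (A * ρ z) := by ring
  intro w hw
  rw [mem_ball] at hw ⊢
  calc dist w z ≤ dist w x + dist z x := dist_triangle_right w z x
    _ < A * ρ z + (A - 1) * ρ z := add_lt_add_of_lt_of_le (hw.trans_le hx) hdist
    _ ≤ 2 * A * ρ z := by linarith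

theorem card_le {ι : Type*} (hρ : IsCriticalRadius ρ C₀ N₀) {e : ι → Euc d} {δ : ℝ}
    (hδ : 0 < δ) (hδC : δ ≤ C₀⁻¹)
    (hdisj : Pairwise (Disjoint on fun j => ball (e j) (δ * ρ (e j)))) {σ : ℝ} (hσ : 0 ≤ σ)
    {z : Euc d} (F : Finset ι) (hF : ∀ j ∈ F, z ∈ ball (e j) (σ * ρ (e j))) :
    (#F : ℝ) ≤ (2 * C₀ / δ * ((1 + σ * C₀) ^ (N₀ + 1)) ^ (N₀ + 1)) ^ d := by
  have := hρ.const_pos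
  have hz := hρ.pos z
  set A := (1 + σ * C₀) ^ (N₀ + 1)
  have hA : 0 < A := by positivity
  have hnear : ∀ j ∈ F, dist z (e j) < σ * ρ (e j) := fun j hj => mem_ball.1 (hF j hj)
  have hcount := card_mul_pow_le_of_pairwiseDisjoint_ball F (hdisj.set_pairwise _)
    (by positivity : 0 < 2 * A * ρ z) (by positivity : 0 < δ * (C₀⁻¹ * A ^ (-N₀) * ρ z))
    (fun j hj => mul_le_mul_of_nonneg_left (hρ.mul_rpow_neg_le_of_dist_lt hσ (hnear j hj)) hδ.le)
    (fun j hj => (ball_subset_ball (mul_le_mul_of_nonneg_right hδC (hρ.pos _).le)).trans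
      (hρ.ball_subset_of_dist_lt hσ (hnear j hj)))
  rw [finrank_euclideanSpace_fin, ← le_div_iff₀ (by positivity), ← div_pow] at hcount
  refine hcount.trans_eq (congrArg (· ^ d) ?_)
  rw [Real.rpow_neg hA.le, Real.rpow_add_one hA.ne']
  field_simp

theorem card_le_mul_rpow {ι : Type*} (hρ : IsCriticalRadius ρ C₀ N₀) {e : ι → Euc d} {δ : ℝ}
    (hδ : 0 < δ) (hδC : δ ≤ C₀⁻¹)
    (hdisj : Pairwise (Disjoint on fun j => ball (e j) (δ * ρ (e j)))) {σ : ℝ} (hσ : 1 ≤ σ)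
    {z : Euc d} (F : Finset ι) (hF : ∀ j ∈ F, z ∈ ball (e j) (σ * ρ (e j))) :
    (#F : ℝ) ≤ (2 * C₀ / δ * (2 * C₀) ^ ((N₀ + 1) ^ 2)) ^ d * σ ^ ((N₀ + 1) ^ 2 * d) := by
  have := hρ.one_le_const
  have := hρ.one_le_exponent
  have hgrowth : ((1 + σ * C₀) ^ (N₀ + 1)) ^ (N₀ + 1) ≤
      (2 * C₀) ^ ((N₀ + 1) ^ 2) * σ ^ ((N₀ + 1) ^ 2) := by
    rw [← Real.rpow_mul (by positivity), ← sq, ← Real.mul_rpow (by positivity) (by positivity)]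
    exact Real.rpow_le_rpow (by positivity) (by nlinarith) (by positivity)
  calc (#F : ℝ) ≤ (2 * C₀ / δ * ((1 + σ * C₀) ^ (N₀ + 1)) ^ (N₀ + 1)) ^ d :=
        hρ.card_le hδ hδC hdisj (by linarith) F hF
    _ ≤ (2 * C₀ / δ * ((2 * C₀) ^ ((N₀ + 1) ^ 2) * σ ^ ((N₀ + 1) ^ 2))) ^ d := by gcongr
    _ = (2 * C₀ / δ * (2 * C₀) ^ ((N₀ + 1) ^ 2)) ^ d * σ ^ ((N₀ + 1) ^ 2 * d) := by
        rw [← mul_assoc, mul_pow, Real.rpow_mul (by linarith), Real.rpow_natCast]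

end IsCriticalRadius

/-- for a critical radius function `ρ` there is a sequence `x_j` such that the
critical balls `Q_j = B(x_j, ρ(x_j))` cover `ℝ^d`, and there are constants `C, N₁ > 0` such that
for every `σ ≥ 1`, `Σ_j χ_{σ Q_j} ≤ C σ^{N₁}` pointwise. -/
theorem stmt4 {d : ℕ} (hd : 1 ≤ d) (ρ : Euc d → ℝ) (C₀ N₀ : ℝ)
    (hρ : IsCriticalRadius ρ C₀ N₀) :
    ∃ x : ℕ → Euc d,
      (⋃ j, ball (x j) (ρ (x j))) = univ ∧
      ∃ C > (0:ℝ), ∃ N₁ > (0:ℝ), ∀ σ : ℝ, 1 ≤ σ → ∀ z : Euc d,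
        (∑' j, Set.indicator (ball (x j) (σ * ρ (x j))) (fun _ => (1 : ℝ≥0∞)) z) ≤
          ENNReal.ofReal (C * σ ^ N₁) := by
  have : Nonempty (Fin d) := ⟨⟨0, hd⟩⟩
  have := hρ.const_pos
  have := hρ.one_le_exponent
  obtain ⟨e, hdisj, hcover⟩ := exists_seq_pairwise_disjoint_ball_covering hρ.pos
    (by positivity : 0 < C₀⁻¹ * 2 ^ (-N₀)) fun _ _ => hρ.mul_le_of_dist_le
  have hδC : C₀⁻¹ * 2 ^ (-N₀) / 4 ≤ C₀⁻¹ := by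
    have : (2 : ℝ) ^ (-N₀) ≤ 1 := Real.rpow_le_one_of_one_le_of_nonpos one_le_two (by linarith)
    have : 0 < C₀⁻¹ := by positivity
    nlinarith
  refine ⟨e, hcover, _, by positivity, (N₀ + 1) ^ 2 * d, by positivity, fun σ hσ z =>
    tsum_indicator_one_le_ofReal _ z fun F hF =>
      hρ.card_le_mul_rpow (by positivity) hδC hdisj hσ F hF⟩
end
end

section
/- Let d ≥ 3 and let V ∈ RH_q for some q > d/2, with V not identically zero, and let ρ be the associated critical radius function ρ(x) = sup{r > 0 : r^{2−d} ∫_{B(x,r)} V ≤ 1} (which is finite and positive at every point). Then there exist constants C > 0 and N > 0 such that for every x₀ ∈ ℝ^d and every R > 0, R^{2−d} ∫_{B(x₀,R)} V(y) dy ≤ C (1 + R/ρ(x₀))^{N} (1 + ρ(x₀)/R)^{d/q − 2}. -/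
open MeasureTheory Metric Set
open scoped ENNReal NNReal

noncomputable section

/-- A nonnegative function `V` is in the reverse Hölder class `RH_q`:
`V ≥ 0`, `V` and `V^q` are locally integrable, and
`((1/|B|)∫_B V^q)^{1/q} ≤ C (1/|B|)∫_B V` for every ball `B`. -/
def IsRH {d : ℕ} (q : ℝ) (V : Euc d → ℝ) : Prop :=
  (∀ x, 0 ≤ V x) ∧ LocallyIntegrable V volume ∧
    LocallyIntegrable (fun x => V x ^ q) volume ∧
  ∃ C > (0:ℝ), ∀ (c : Euc d) (r : ℝ), 0 < r →
    ((∫ y in ball c r, V y ^ q) / (volume (ball c r)).toReal) ^ (1 / q) ≤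
      C * ((∫ y in ball c r, V y) / (volume (ball c r)).toReal)

/-! Hölder's inequality turns the reverse Hölder condition into
`∫_E V ≤ C (|E|/|B|)^{1-1/q} ∫_B V` for every `E` inside a ball `B`. With `E` a concentric
smaller ball this bounds the mass of small balls by `(t'/t)^{d-d/q}`; with `E` a thin outer
annulus it gives `∫_{B(t)} V ≤ 2 ∫_{B(σt)} V`, which iterates to the polynomial growth
`∫_{B(t)} V ≤ 2 (t/t')^M ∫_{B(t')} V`. By definition of `ρ` there is a radius
`r ∈ (ρ(x₀)/2, ρ(x₀)]` with `∫_{B(x₀,r)} V ≤ r^{d-2}`; comparing `B(x₀,R)` with `B(x₀,r)`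
by growth when `R ≥ r` and by the small-ball bound when `R < r` (where `d/q - 2 < 0` makes the
second factor large) gives the estimate. -/

open Filter Topology

section

variable {α : Type*} [MeasurableSpace α] {μ : Measure α} {f : α → ℝ} {q : ℝ}

theorem setIntegral_le_rpow_mul_measureReal {s : Set α} (hq : 1 < q) (hf : ∀ x, 0 ≤ f x)
    (hμs : μ s ≠ ∞) (hfm : AEStronglyMeasurable f (μ.restrict s))
    (hfq : IntegrableOn (fun x => f x ^ q) s μ) :
    ∫ x in s, f x ∂μ ≤ (∫ x in s, f x ^ q ∂μ) ^ (1 / q) * μ.real s ^ (1 - 1 / q) := by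
  have : IsFiniteMeasure (μ.restrict s) := isFiniteMeasure_restrict.mpr hμs
  have hq0 : 0 < q := zero_lt_one.trans hq
  have hfLp : MemLp f (ENNReal.ofReal q) (μ.restrict s) := by
    rw [← memLp_norm_rpow_iff hfm (by positivity) ENNReal.ofReal_ne_top,
      ENNReal.div_self (by positivity) ENNReal.ofReal_ne_top, memLp_one_iff_integrable,
      ENNReal.toReal_ofReal hq0.le]
    exact hfq.congr (ae_of_all _ fun x => by simp [abs_of_nonneg (hf x)])
  have H := integral_mul_le_Lp_mul_Lq_of_nonneg (Real.HolderConjugate.conjExponent hq)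
    (ae_of_all _ hf) (ae_of_all _ fun _ => zero_le_one) hfLp (memLp_const 1)
  have hconj : 1 / q.conjExponent = 1 - 1 / q := by
    rw [Real.conjExponent, one_div_div]
    field_simp
  simpa [hconj, measureReal_restrict_apply_univ] using H

theorem setIntegral_le_mul_rpow_of_rpow_average_le {s t : Set α} {C : ℝ} (hq : 1 < q)
    (hf : ∀ x, 0 ≤ f x) (hst : s ⊆ t) (ht : 0 < μ.real t)
    (hfm : AEStronglyMeasurable f (μ.restrict t)) (hfq : IntegrableOn (fun x => f x ^ q) t μ)
    (hRH : ((∫ x in t, f x ^ q ∂μ) / μ.real t) ^ (1 / q) ≤ C * ((∫ x in t, f x ∂μ) / μ.real t)) :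
    ∫ x in s, f x ∂μ ≤ C * (μ.real s / μ.real t) ^ (1 - 1 / q) * ∫ x in t, f x ∂μ := by
  have hμt : μ t ≠ ∞ := fun h => by simp [Measure.real, h] at ht
  have hpow : ∀ x, 0 ≤ f x ^ q := fun x => Real.rpow_nonneg (hf x) q
  calc ∫ x in s, f x ∂μ
      ≤ (∫ x in s, f x ^ q ∂μ) ^ (1 / q) * μ.real s ^ (1 - 1 / q) :=
        setIntegral_le_rpow_mul_measureReal hq hf (measure_ne_top_of_subset hst hμt)
          (hfm.mono_measure (Measure.restrict_mono hst le_rfl)) (hfq.mono_set hst)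
    _ ≤ (∫ x in t, f x ^ q ∂μ) ^ (1 / q) * μ.real s ^ (1 - 1 / q) := by
        gcongr ?_ ^ _ * _
        · exact setIntegral_nonneg_of_ae (ae_of_all _ hpow)
        · exact setIntegral_mono_set hfq (ae_of_all _ hpow) hst.eventuallyLE
    _ = ((∫ x in t, f x ^ q ∂μ) / μ.real t) ^ (1 / q) * μ.real t ^ (1 / q)
          * μ.real s ^ (1 - 1 / q) := by
        rw [← Real.mul_rpow (div_nonneg (setIntegral_nonneg_of_ae (ae_of_all _ hpow)) ht.le)
          ht.le, div_mul_cancel₀ _ ht.ne']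
    _ ≤ C * ((∫ x in t, f x ∂μ) / μ.real t) * μ.real t ^ (1 / q) * μ.real s ^ (1 - 1 / q) := by
        gcongr
    _ = C * (μ.real s / μ.real t) ^ (1 - 1 / q) * ∫ x in t, f x ∂μ := by
        rw [Real.div_rpow measureReal_nonneg ht.le, Real.rpow_sub ht, Real.rpow_one]
        have : μ.real t ^ (1 / q) ≠ 0 := by positivity
        field_simp

end

theorem le_two_mul_rpow_mul_of_le_two_mul {g : ℝ → ℝ} {σ t' t : ℝ} (hσ : σ ∈ Ioo 0 1)
    (hg : ∀ s, 0 < s → 0 ≤ g s) (hmono : MonotoneOn g (Ioi 0))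
    (hdbl : ∀ s, 0 < s → g s ≤ 2 * g (σ * s)) (ht' : 0 < t') (htt : t' ≤ t) :
    g t ≤ 2 * (t / t') ^ (Real.log 2 / Real.log σ⁻¹) * g t' := by
  obtain ⟨hσ0, hσ1⟩ := hσ
  have ht : 0 < t := ht'.trans_le htt
  have hlogσ : 0 < Real.log σ⁻¹ := Real.log_pos (one_lt_inv₀ hσ0 |>.mpr hσ1)
  have hiter : ∀ k : ℕ, g t ≤ 2 ^ k * g (σ ^ k * t) := by
    intro k
    induction k with
    | zero => simp
    | succ k ih =>
      calc g t ≤ 2 ^ k * g (σ ^ k * t) := ih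
        _ ≤ 2 ^ k * (2 * g (σ * (σ ^ k * t))) := by gcongr; exact hdbl _ (by positivity)
        _ = 2 ^ (k + 1) * g (σ ^ (k + 1) * t) := by ring_nf
  set x := Real.log (t / t') / Real.log σ⁻¹
  have hx : 0 ≤ x := div_nonneg (Real.log_nonneg ((one_le_div ht').mpr htt)) hlogσ.le
  set k := ⌈x⌉₊
  have hσk : σ ^ k * t ≤ t' := by
    have : Real.log (t / t') ≤ Real.log ((σ⁻¹) ^ k) := by
      rw [Real.log_pow]
      exact (div_le_iff₀ hlogσ).mp (Nat.le_ceil x)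
    rw [Real.log_le_log_iff (by positivity) (by positivity), div_le_iff₀ ht', inv_pow] at this
    calc σ ^ k * t ≤ σ ^ k * ((σ ^ k)⁻¹ * t') := by gcongr
      _ = t' := by field_simp
  have h2k : (2 : ℝ) ^ k ≤ 2 * (t / t') ^ (Real.log 2 / Real.log σ⁻¹) := by
    have hpow : (2 : ℝ) ^ x = (t / t') ^ (Real.log 2 / Real.log σ⁻¹) := by
      rw [Real.rpow_def_of_pos two_pos, Real.rpow_def_of_pos (by positivity)]
      congr 1
      ring
    calc (2 : ℝ) ^ k = 2 ^ (k : ℝ) := (Real.rpow_natCast 2 k).symm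
      _ ≤ 2 ^ (x + 1) := Real.rpow_le_rpow_of_exponent_le one_le_two (Nat.ceil_lt_add_one hx).le
      _ = _ := by rw [Real.rpow_add two_pos, Real.rpow_one, hpow, mul_comm]
  calc g t ≤ 2 ^ k * g (σ ^ k * t) := hiter k
    _ ≤ 2 ^ k * g t' := by
        gcongr
        exact hmono (mem_Ioi.mpr (by positivity)) (mem_Ioi.mpr ht') hσk
    _ ≤ 2 * (t / t') ^ (Real.log 2 / Real.log σ⁻¹) * g t' := by gcongr; exact hg t' ht'

theorem exists_mem_half_lt_le_sSup {S : Set ℝ} (h : 0 < sSup S) :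
    ∃ r ∈ S, sSup S / 2 < r ∧ r ≤ sSup S := by
  have hne : S.Nonempty := by
    by_contra hS
    simp [not_nonempty_iff_eq_empty.mp hS] at h
  have hbdd : BddAbove S := by
    by_contra hS
    simp [Real.sSup_of_not_bddAbove hS] at h
  obtain ⟨r, hrS, hr⟩ := exists_lt_of_lt_csSup hne (half_lt_self h)
  exact ⟨r, hrS, hr, le_csSup hbdd hrS⟩

theorem rpow_sub_mul_le_mul_div_rpow {a b r R I K : ℝ} (hr : 0 < r) (hR : 0 < R)
    (h : I ≤ K * r ^ (b - a)) : R ^ (a - b) * I ≤ K * (R / r) ^ (a - b) :=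
  calc R ^ (a - b) * I ≤ R ^ (a - b) * (K * r ^ (b - a)) := by gcongr
    _ = K * (R / r) ^ (a - b) := by
        rw [Real.div_rpow hR.le hr.le, ← neg_sub a b, Real.rpow_neg hr.le, div_eq_mul_inv]
        ring

theorem div_rpow_le_of_half_lt_le {ρ r R N e : ℝ} (hρ : 0 < ρ) (hr : ρ / 2 < r) (hrR : r ≤ R)
    (hN : 0 ≤ N) (he : -2 ≤ e) (he0 : e ≤ 0) :
    (R / r) ^ N ≤ 9 * 2 ^ N * (1 + R / ρ) ^ N * (1 + ρ / R) ^ e := by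
  have hr0 : 0 < r := by linarith
  have hR : 0 < R := hr0.trans_le hrR
  have hRr : R / r ≤ 2 * (1 + R / ρ) := by
    rw [div_le_iff₀ hr0]
    have : R ≤ 2 * r * (R / ρ) := by
      rw [mul_div_assoc', le_div_iff₀ hρ]; nlinarith
    nlinarith [div_nonneg hR.le hρ.le]
  have hB : (1 : ℝ) / 9 ≤ (1 + ρ / R) ^ e := by
    have h3 : 1 + ρ / R ≤ 3 := by
      have : ρ / R < 2 := by rw [div_lt_iff₀ hR]; linarith
      linarith
    calc (1 : ℝ) / 9 = 3 ^ (-2 : ℝ) := by norm_num [Real.rpow_neg, Real.rpow_two]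
      _ ≤ 3 ^ e := Real.rpow_le_rpow_of_exponent_le (by norm_num) he
      _ ≤ (1 + ρ / R) ^ e := Real.rpow_le_rpow_of_nonpos (by positivity) h3 he0
  calc (R / r) ^ N ≤ (2 * (1 + R / ρ)) ^ N := by gcongr
    _ = 9 * 2 ^ N * (1 + R / ρ) ^ N * (1 / 9) := by
        rw [Real.mul_rpow zero_le_two (by positivity)]; ring
    _ ≤ 9 * 2 ^ N * (1 + R / ρ) ^ N * (1 + ρ / R) ^ e := by gcongr

theorem div_rpow_neg_le_of_le_half_lt {ρ r R e : ℝ} (hR : 0 < R) (hRr : R ≤ r) (hrρ : r ≤ ρ)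
    (hr : ρ / 2 < r) (he : -2 ≤ e) (he0 : e ≤ 0) :
    (R / r) ^ (-e) ≤ 16 * (1 + ρ / R) ^ e := by
  have hρ : 0 < ρ := hR.trans_le (hRr.trans hrρ)
  have h4 : (2 : ℝ) ^ (-e) ≤ 4 := by
    calc (2 : ℝ) ^ (-e) ≤ 2 ^ (2 : ℝ) := Real.rpow_le_rpow_of_exponent_le one_le_two (by linarith)
      _ = 4 := by norm_num [Real.rpow_two]
  calc (R / r) ^ (-e) ≤ (2 * (R / ρ)) ^ (-e) := by
        refine Real.rpow_le_rpow (div_pos hR (by linarith)).le ?_ (by linarith)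
        rw [mul_div_assoc', div_le_div_iff₀ (by linarith) hρ]
        nlinarith
    _ = 2 ^ (-e) * (2 ^ (-e) * (2 * (ρ / R)) ^ e) := by
        rw [Real.mul_rpow zero_le_two (by positivity), Real.mul_rpow zero_le_two (by positivity),
          Real.rpow_neg zero_le_two, Real.rpow_neg (by positivity), ← inv_div, Real.inv_rpow
          (by positivity)]
        field_simp
    _ ≤ 4 * (4 * (1 + ρ / R) ^ e) := by
        gcongr ?_ * (?_ * ?_)
        refine Real.rpow_le_rpow_of_nonpos (by positivity) ?_ he0
        have : 1 ≤ ρ / R := (one_le_div hR).mpr (hRr.trans hrρ)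
        linarith
    _ = 16 * (1 + ρ / R) ^ e := by ring

section AddHaar

variable {E : Type*} [NormedAddCommGroup E] [NormedSpace ℝ E] [MeasurableSpace E]
  [FiniteDimensional ℝ E] (μ : Measure E) [μ.IsAddHaarMeasure]

theorem addHaar_real_ball_mul_of_pos [BorelSpace E] (x : E) {r : ℝ} (hr : 0 < r) (s : ℝ) :
    μ.real (ball x (r * s)) = r ^ Module.finrank ℝ E * μ.real (ball x s) := by
  rw [measureReal_def, Measure.addHaar_ball_mul_of_pos μ x hr, ENNReal.toReal_mul,
    ENNReal.toReal_ofReal (by positivity), ← Measure.addHaar_ball_center μ x, measureReal_def]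

theorem addHaar_real_ball_pos (x : E) {r : ℝ} (hr : 0 < r) : 0 < μ.real (ball x r) :=
  ENNReal.toReal_pos (measure_ball_pos μ x hr).ne' measure_ball_lt_top.ne

end AddHaar

section ReverseHolder

variable {d : ℕ} {q : ℝ} {V : Euc d → ℝ}

theorem IsRH.integrableOn_ball (hV : IsRH q V) (c : Euc d) (t : ℝ) :
    IntegrableOn V (ball c t) :=
  (hV.2.1.integrableOn_isCompact (isCompact_closedBall c t)).mono_set ball_subset_closedBall

theorem IsRH.setIntegral_ball_mono (hV : IsRH q V) (c : Euc d) {t' t : ℝ} (h : t' ≤ t) :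
    ∫ y in ball c t', V y ≤ ∫ y in ball c t, V y :=
  setIntegral_mono_set (hV.integrableOn_ball c t) (ae_of_all _ hV.1)
    (ball_subset_ball h).eventuallyLE

theorem IsRH.exists_setIntegral_le (hV : IsRH q V) (hq : 1 < q) :
    ∃ C > 0, ∀ (c : Euc d) (t : ℝ), 0 < t → ∀ s ⊆ ball c t,
      ∫ y in s, V y ≤
        C * (volume.real s / volume.real (ball c t)) ^ (1 - 1 / q) * ∫ y in ball c t, V y := by
  obtain ⟨hV0, hVloc, hVqloc, C, hC, hRH⟩ := hV
  refine ⟨C, hC, fun c t ht s hs => setIntegral_le_mul_rpow_of_rpow_average_le hq hV0 hs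
    (addHaar_real_ball_pos volume c ht) hVloc.aestronglyMeasurable.restrict
    ((hVqloc.integrableOn_isCompact (isCompact_closedBall c t)).mono_set ball_subset_closedBall)
    (hRH c t ht)⟩

theorem IsRH.exists_integral_ball_le_mul_rpow (hV : IsRH q V) (hq : 1 < q) :
    ∃ C > 0, ∀ (c : Euc d) (t' t : ℝ), 0 < t' → t' ≤ t →
      ∫ y in ball c t', V y ≤ C * (t' / t) ^ ((d : ℝ) - d / q) * ∫ y in ball c t, V y := by
  obtain ⟨C, hC, hle⟩ := hV.exists_setIntegral_le hq
  refine ⟨C, hC, fun c t' t ht' htt => ?_⟩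
  have ht : 0 < t := ht'.trans_le htt
  have hratio : volume.real (ball c t') / volume.real (ball c t) = (t' / t) ^ d := by
    nth_rw 1 [← div_mul_cancel₀ t' ht.ne']
    rw [addHaar_real_ball_mul_of_pos _ _ (by positivity), finrank_euclideanSpace_fin,
      mul_div_cancel_right₀ _ (addHaar_real_ball_pos volume c ht).ne']
  have hexp : ((t' / t) ^ d) ^ (1 - 1 / q) = (t' / t) ^ ((d : ℝ) - d / q) := by
    rw [← Real.rpow_natCast, ← Real.rpow_mul (by positivity)]
    ring_nf
  simpa only [hratio, hexp] using hle c t ht (ball c t') (ball_subset_ball htt)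

theorem IsRH.exists_integral_ball_le_two_mul (hV : IsRH q V) (hq : 1 < q) :
    ∃ σ ∈ Ioo (0 : ℝ) 1, ∀ (c : Euc d) (t : ℝ), 0 < t →
      ∫ y in ball c t, V y ≤ 2 * ∫ y in ball c (σ * t), V y := by
  obtain ⟨C, hC, hle⟩ := hV.exists_setIntegral_le hq
  have hq' : 0 < 1 - 1 / q := by
    have : 1 / q < 1 := (div_lt_one (zero_lt_one.trans hq)).mpr hq
    linarith
  -- the annulus `B(c,t) \ B(c,σt)` has relative volume `1 - σ^d`, which vanishes as `σ → 1`
  have hlim : Tendsto (fun σ : ℝ => C * (1 - σ ^ d) ^ (1 - 1 / q))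
      (𝓝[<] 1) (𝓝 0) := by
    have hcont : Continuous (fun σ : ℝ => C * (1 - σ ^ d) ^ (1 - 1 / q)) :=
      continuous_const.mul ((Real.continuous_rpow_const hq'.le).comp (by fun_prop))
    simpa only [one_pow, sub_self, Real.zero_rpow hq'.ne', mul_zero] using
      hcont.continuousWithinAt.tendsto (x := 1) (s := Iio 1)
  obtain ⟨σ, hσC, hσ⟩ := ((hlim.eventually (ge_mem_nhds one_half_pos)).and
    (Ioo_mem_nhdsLT zero_lt_one)).exists
  refine ⟨σ, hσ, fun c t ht => ?_⟩
  have hsub : ball c (σ * t) ⊆ ball c t :=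
    ball_subset_ball (mul_le_of_le_one_left ht.le hσ.2.le)
  have hvol : volume.real (ball c t \ ball c (σ * t)) / volume.real (ball c t) = 1 - σ ^ d := by
    rw [measureReal_sdiff hsub measurableSet_ball, addHaar_real_ball_mul_of_pos _ _ hσ.1,
      finrank_euclideanSpace_fin, ← one_sub_mul,
      mul_div_cancel_right₀ _ (addHaar_real_ball_pos volume c ht).ne']
  have hannulus := hle c t ht (ball c t \ ball c (σ * t)) sdiff_subset
  rw [hvol, setIntegral_sdiff measurableSet_ball (hV.integrableOn_ball c t) hsub] at hannulus
  have hI : 0 ≤ ∫ y in ball c t, V y := setIntegral_nonneg measurableSet_ball fun y _ => hV.1 y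
  nlinarith

theorem IsRH.exists_integral_ball_le_two_mul_rpow (hV : IsRH q V) (hq : 1 < q) :
    ∃ M > (0 : ℝ), ∀ (c : Euc d) (t' t : ℝ), 0 < t' → t' ≤ t →
      ∫ y in ball c t, V y ≤ 2 * (t / t') ^ M * ∫ y in ball c t', V y := by
  obtain ⟨σ, hσ, hdbl⟩ := hV.exists_integral_ball_le_two_mul hq
  refine ⟨Real.log 2 / Real.log σ⁻¹,
    div_pos (Real.log_pos one_lt_two) (Real.log_pos ((one_lt_inv₀ hσ.1).mpr hσ.2)),
    fun c t' t ht' htt => le_two_mul_rpow_mul_of_le_two_mul hσ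
      (fun s _ => setIntegral_nonneg measurableSet_ball fun y _ => hV.1 y)
      (fun _ _ _ _ h => hV.setIntegral_ball_mono c h) (hdbl c) ht' htt⟩

theorem IsRH.exists_rpow_mul_integral_ball_le_of_le (hV : IsRH q V) (hq : 1 < q) :
    ∃ N > (0 : ℝ), ∀ (c : Euc d) (r R : ℝ), 0 < r → r ≤ R →
      ∫ y in ball c r, V y ≤ r ^ ((d : ℝ) - 2) →
      R ^ ((2 : ℝ) - d) * ∫ y in ball c R, V y ≤ 2 * (R / r) ^ N := by
  obtain ⟨M, hM, hgrow⟩ := hV.exists_integral_ball_le_two_mul_rpow hq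
  refine ⟨M + 2, by positivity, fun c r R hr hrR hcrit => ?_⟩
  have hR : 0 < R := hr.trans_le hrR
  have hRr : 1 ≤ R / r := (one_le_div hr).mpr hrR
  calc R ^ ((2 : ℝ) - d) * ∫ y in ball c R, V y
      ≤ 2 * (R / r) ^ M * (R / r) ^ ((2 : ℝ) - d) :=
        rpow_sub_mul_le_mul_div_rpow hr hR ((hgrow c r R hr hrR).trans (by gcongr))
    _ = 2 * (R / r) ^ (M + (2 - d)) := by rw [Real.rpow_add (by positivity), mul_assoc]
    _ ≤ 2 * (R / r) ^ (M + 2) := by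
        gcongr 2 * ?_
        exact Real.rpow_le_rpow_of_exponent_le hRr (by linarith [(Nat.cast_nonneg d : (0 : ℝ) ≤ d)])

theorem IsRH.exists_rpow_mul_integral_ball_le_of_ge (hV : IsRH q V) (hq : 1 < q) :
    ∃ C > (0 : ℝ), ∀ (c : Euc d) (r R : ℝ), 0 < R → R ≤ r →
      ∫ y in ball c r, V y ≤ r ^ ((d : ℝ) - 2) →
      R ^ ((2 : ℝ) - d) * ∫ y in ball c R, V y ≤ C * (R / r) ^ (2 - d / q) := by
  obtain ⟨C, hC, hsmall⟩ := hV.exists_integral_ball_le_mul_rpow hq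
  refine ⟨C, hC, fun c r R hR hRr hcrit => ?_⟩
  have hr : 0 < r := hR.trans_le hRr
  calc R ^ ((2 : ℝ) - d) * ∫ y in ball c R, V y
      ≤ C * (R / r) ^ ((d : ℝ) - d / q) * (R / r) ^ ((2 : ℝ) - d) :=
        rpow_sub_mul_le_mul_div_rpow hr hR ((hsmall c R r hR hRr).trans (by gcongr))
    _ = C * (R / r) ^ (2 - d / q) := by
        rw [mul_assoc, ← Real.rpow_add (by positivity)]
        ring_nf

end ReverseHolder

theorem stmt15_general {d : ℕ} (hd : 3 ≤ d) (q : ℝ) (hq : (d : ℝ) / 2 < q)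
    (V : Euc d → ℝ) (hV : IsRH q V)
    (ρ : Euc d → ℝ)
    (hρdef : ∀ x, ρ x =
      sSup {r : ℝ | 0 < r ∧ (∫ y in ball x r, V y) ≤ r ^ ((d : ℝ) - 2)})
    (hρpos : ∀ x, 0 < ρ x) :
    ∃ C > (0:ℝ), ∃ N > (0:ℝ), ∀ (x₀ : Euc d) (R : ℝ), 0 < R →
      R ^ ((2:ℝ) - (d:ℝ)) * ∫ y in ball x₀ R, V y ≤
        C * (1 + R / ρ x₀) ^ N * (1 + ρ x₀ / R) ^ ((d : ℝ) / q - 2) := by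
  have hd' : (3 : ℝ) ≤ d := by exact_mod_cast hd
  have hq1 : 1 < q := by linarith
  have he : -2 ≤ (d : ℝ) / q - 2 ∧ (d : ℝ) / q - 2 ≤ 0 := by
    constructor
    · linarith [div_nonneg (by linarith : (0 : ℝ) ≤ d) (by linarith : 0 ≤ q)]
    · linarith [(div_le_iff₀ (by linarith : 0 < q)).mpr (by linarith : (d : ℝ) ≤ 2 * q)]
  obtain ⟨N, hN, hlarge⟩ := hV.exists_rpow_mul_integral_ball_le_of_le hq1
  obtain ⟨C, hC, hsmall⟩ := hV.exists_rpow_mul_integral_ball_le_of_ge hq1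
  refine ⟨18 * 2 ^ N + 16 * C, add_pos (by positivity) (by linarith), N, hN, fun x₀ R hR => ?_⟩
  obtain ⟨r, ⟨hr, hcrit⟩, hρr, hrρ⟩ := exists_mem_half_lt_le_sSup (hρdef x₀ ▸ hρpos x₀)
  rw [← hρdef x₀] at hρr hrρ
  have hA : 1 ≤ (1 + R / ρ x₀) ^ N :=
    Real.one_le_rpow (le_add_of_nonneg_right (div_nonneg hR.le (hρpos x₀).le)) hN.le
  have hB : 0 ≤ (1 + ρ x₀ / R) ^ ((d : ℝ) / q - 2) :=
    Real.rpow_nonneg (add_nonneg zero_le_one (div_nonneg (hρpos x₀).le hR.le)) _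
  rcases le_or_gt r R with hrR | hRr
  · calc R ^ ((2:ℝ) - (d:ℝ)) * ∫ y in ball x₀ R, V y ≤ 2 * (R / r) ^ N :=
          hlarge x₀ r R hr hrR hcrit
      _ ≤ 2 * (9 * 2 ^ N * (1 + R / ρ x₀) ^ N * (1 + ρ x₀ / R) ^ ((d : ℝ) / q - 2)) := by
          gcongr
          exact div_rpow_le_of_half_lt_le (hρpos x₀) hρr hrR hN.le he.1 he.2
      _ ≤ _ := by linarith [mul_nonneg (mul_nonneg hC.le (zero_le_one.trans hA)) hB]
  · calc R ^ ((2:ℝ) - (d:ℝ)) * ∫ y in ball x₀ R, V y ≤ C * (R / r) ^ (2 - d / q) :=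
          hsmall x₀ r R hR hRr.le hcrit
      _ ≤ C * (16 * (1 + ρ x₀ / R) ^ ((d : ℝ) / q - 2)) := by
          gcongr
          rw [← neg_sub]
          exact div_rpow_neg_le_of_le_half_lt hR hRr.le hrρ hρr he.1 he.2
      _ ≤ _ := by
          linarith [mul_le_mul_of_nonneg_left hA (mul_nonneg hC.le hB),
            mul_nonneg (mul_nonneg (by positivity : (0:ℝ) ≤ 2 ^ N) (zero_le_one.trans hA)) hB]

/-- Lemma on `V ∈ RH_q`, `q > d/2`: with
`ρ(x) = sup{r > 0 : r^{2-d} ∫_{B(x,r)} V ≤ 1}` finite and positive, there exist `C, N > 0`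
such that for every `x₀` and `R > 0`,
`R^{2-d} ∫_{B(x₀,R)} V ≤ C (1+R/ρ(x₀))^N (1+ρ(x₀)/R)^{d/q-2}`. -/
theorem stmt15 {d : ℕ} (hd : 3 ≤ d) (q : ℝ) (hq : (d : ℝ) / 2 < q)
    (V : Euc d → ℝ) (hV : IsRH q V) (hV0 : ¬ (V =ᵐ[(volume : Measure (Euc d))] 0))
    (ρ : Euc d → ℝ)
    (hρdef : ∀ x, ρ x =
      sSup {r : ℝ | 0 < r ∧ (∫ y in ball x r, V y) ≤ r ^ ((d : ℝ) - 2)})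
    (hρpos : ∀ x, 0 < ρ x) :
    ∃ C > (0:ℝ), ∃ N > (0:ℝ), ∀ (x₀ : Euc d) (R : ℝ), 0 < R →
      R ^ ((2:ℝ) - (d:ℝ)) * ∫ y in ball x₀ R, V y ≤
        C * (1 + R / ρ x₀) ^ N * (1 + ρ x₀ / R) ^ ((d : ℝ) / q - 2) :=
  stmt15_general hd q hq V hV ρ hρdef hρpos
end
end

section
/- Let ρ be a critical radius function on ℝ^d, let 1 ≤ p < ∞, let φ be a Young function, and let T be a map from a set S of measurable functions on ℝ^d to measurable functions on ℝ^d such that: for every θ ≥ 0 there exists a constant C with ∫ |Tf|^p w ≤ C ∫ |f|^p M_φ^θ w for every weight w and every f ∈ S. Then for every f ∈ S satisfying ∫_{ℝ^d} |f(x)|^p (1+|x|)^{−σ} dx < ∞ for some σ > 0, one has Tf ∈ L^p_{loc}(ℝ^d), i.e. ∫_B |Tf|^p < ∞ for every ball B; in particular Tf is finite almost everywhere. -/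
open MeasureTheory Metric Set
open scoped ENNReal NNReal

noncomputable section

/- The test weight is the indicator `w` of a ball `B(x₀, R)`. Its Luxemburg averages are bounded,
and vanish on balls missing `B(x₀, R)`. A ball `B(c, r)` that contains `x` and meets `B(x₀, R)`
has `1 + |x| ≲ 1 + r`, while the sublinear growth `ρ(c) ≲ (1 + r)^{N₀/(N₀+1)}` of the critical
radius gives `1 + r/ρ(c) ≳ (1 + r)^{1/(N₀+1)}`. Hence `M_φ^θ w(x) ≲ (1 + |x|)^{-σ}` for
`θ = σ(N₀+1)`, and the hypothesis on `T` with this weight bounds `∫_B |Tf|^p` by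
`∫ |f|^p (1 + |x|)^{-σ} < ∞`. -/

open Filter Topology

lemma IsYoung.exists_pos_apply_le_one {φ : ℝ → ℝ} (hφ : IsYoung φ) : ∃ t > 0, φ t ≤ 1 := by
  have hφ0 : Tendsto φ (𝓝[>] 0) (𝓝 0) := by
    simpa [hφ.zero] using ((hφ.continuous 0 self_mem_Ici).mono Ioi_subset_Ici_self).tendsto
  obtain ⟨t, ht, ht0⟩ :=
    ((hφ0.eventually (Iio_mem_nhds one_pos)).and self_mem_nhdsWithin).exists
  exact ⟨t, ht0, le_of_lt ht⟩

section Luxemburg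

variable {d : ℕ} {φ : ℝ → ℝ} {f : Euc d → ℝ} {c : Euc d} {r : ℝ}

lemma luxAvg_nonneg : 0 ≤ luxAvg φ f c r :=
  Real.sInf_nonneg fun _ hlam => hlam.1.le

lemma luxAvg_le_of_forall_le_one (hφ : IsYoung φ) {lam : ℝ} (hlam : 0 < lam)
    (hf : ∀ y ∈ ball c r, φ (|f y| / lam) ≤ 1) : luxAvg φ f c r ≤ lam := by
  refine csInf_le ⟨0, fun _ h => h.1.le⟩ ⟨hlam, ?_⟩
  have hbound : ∀ y ∈ ball c r, ‖φ (|f y| / lam)‖ ≤ 1 := fun y hy => by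
    rw [Real.norm_of_nonneg (hφ.nonneg _ (by positivity))]
    exact hf y hy
  calc ∫ y in ball c r, φ (|f y| / lam) ≤ ‖∫ y in ball c r, φ (|f y| / lam)‖ := le_abs_self _
    _ ≤ 1 * volume.real (ball c r) :=
        norm_setIntegral_le_of_norm_le_const measure_ball_lt_top hbound
    _ = (volume (ball c r)).toReal := one_mul _

lemma luxAvg_eq_zero_of_eqOn_zero (hφ : φ 0 = 0) (hf : EqOn f 0 (ball c r)) :
    luxAvg φ f c r = 0 := by
  have hmodular : ∀ lam : ℝ, ∫ y in ball c r, φ (|f y| / lam) = 0 := fun lam => by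
    rw [setIntegral_congr_fun measurableSet_ball (g := fun _ => 0) fun y hy => by
      simp [hf hy, hφ], integral_zero]
  have hset : {lam : ℝ | 0 < lam ∧
      (∫ y in ball c r, φ (|f y| / lam)) ≤ (volume (ball c r)).toReal} = Ioi 0 := by
    ext lam
    simp [hmodular]
  rw [luxAvg, hset, csInf_Ioi]

end Luxemburg

lemma isWeight_indicator_one {d : ℕ} {s : Set (Euc d)} (hs : MeasurableSet s) :
    IsWeight (s.indicator 1) :=
  ⟨fun x => indicator_nonneg (fun _ _ => zero_le_one) x, (locallyIntegrable_const 1).indicator hs⟩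

lemma rpow_one_sub_div_le_one_add_div {a E β r : ℝ} (ha : 0 < a) (hE : 1 ≤ E) (hβ : 0 ≤ β)
    (hr : 0 ≤ r) (haE : a ≤ E * (1 + r) ^ β) : (1 + r) ^ (1 - β) / E ≤ 1 + r / a := by
  have hq : 1 ≤ (1 + r) ^ β := Real.one_le_rpow (by linarith) hβ
  have hsplit : (1 + r) ^ (1 - β) / E = ((1 + r) ^ β)⁻¹ / E + r / (E * (1 + r) ^ β) := by
    rw [sub_eq_add_neg, Real.rpow_add (by linarith), Real.rpow_one, Real.rpow_neg (by linarith)]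
    field_simp
  have hfirst : ((1 + r) ^ β)⁻¹ / E ≤ 1 :=
    div_le_one_of_le₀ ((inv_le_one_of_one_le₀ hq).trans hE) (by linarith)
  have hsecond : r / (E * (1 + r) ^ β) ≤ r / a := div_le_div_of_nonneg_left hr ha haE
  linarith

lemma rpow_neg_le_mul_rpow_neg {u v A σ : ℝ} (hu : 0 < u) (hv : 0 < v) (hvu : v ≤ A * u)
    (hσ : 0 ≤ σ) : u ^ (-σ) ≤ A ^ σ * v ^ (-σ) := by
  have hA : 0 < A := pos_of_mul_pos_left (hv.trans_le hvu) hu.le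
  calc u ^ (-σ) = A ^ σ * (A * u) ^ (-σ) := by
        rw [Real.mul_rpow hA.le hu.le, Real.rpow_neg hA.le, mul_inv_cancel_left₀ (by positivity)]
    _ ≤ A ^ σ * v ^ (-σ) :=
        mul_le_mul_of_nonneg_left (Real.rpow_le_rpow_of_nonpos hv hvu (neg_nonpos.2 hσ))
          (by positivity)

section CriticalRadius

variable {d : ℕ} {ρ : Euc d → ℝ} {C₀ N₀ : ℝ}

lemma IsCriticalRadius.exists_le_mul_one_add_dist_rpow (hρ : IsCriticalRadius ρ C₀ N₀)
    (x₀ : Euc d) : ∃ E ≥ 1, ∀ y, ρ y ≤ E * (1 + dist x₀ y) ^ (N₀ / (N₀ + 1)) := by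
  obtain ⟨hC₀, hN₀, hρpos, hρ⟩ := hρ
  set β := N₀ / (N₀ + 1)
  have hβ0 : 0 ≤ β := by positivity
  have hβ1 : β ≤ 1 := div_le_one_of_le₀ (by linarith) (by linarith)
  have ha := hρpos x₀
  set D := 1 + (ρ x₀)⁻¹
  have hD : 1 ≤ D := le_add_of_nonneg_right (by positivity)
  refine ⟨max 1 (C₀ * ρ x₀ * D), le_max_left _ _, fun y => ?_⟩
  have hscale : 1 + dist x₀ y / ρ x₀ ≤ D * (1 + dist x₀ y) := by
    have : 0 ≤ dist x₀ y := dist_nonneg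
    rw [div_eq_mul_inv]
    nlinarith [inv_pos.2 ha]
  calc ρ y ≤ C₀ * ρ x₀ * (1 + dist x₀ y / ρ x₀) ^ β := (hρ x₀ y).2
    _ ≤ C₀ * ρ x₀ * (D * (1 + dist x₀ y)) ^ β := by gcongr
    _ = C₀ * ρ x₀ * D ^ β * (1 + dist x₀ y) ^ β := by
        rw [Real.mul_rpow (by linarith) (by positivity)]; ring
    _ ≤ C₀ * ρ x₀ * D * (1 + dist x₀ y) ^ β := by
        gcongr; exact Real.rpow_le_self_of_one_le hD hβ1
    _ ≤ max 1 (C₀ * ρ x₀ * D) * (1 + dist x₀ y) ^ β := by gcongr; exact le_max_right _ _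

lemma IsCriticalRadius.exists_one_add_div_rpow_neg_le (hρ : IsCriticalRadius ρ C₀ N₀)
    {σ : ℝ} (hσ : 0 ≤ σ) (x₀ : Euc d) {R : ℝ} (hR : 0 ≤ R) :
    ∃ K ≥ 0, ∀ (c : Euc d) (r : ℝ), 0 ≤ r → dist x₀ c ≤ R + r →
      (1 + r / ρ c) ^ (-(σ * (N₀ + 1))) ≤ K * (1 + r) ^ (-σ) := by
  obtain ⟨E, hE, hρE⟩ := hρ.exists_le_mul_one_add_dist_rpow x₀
  have hN₀ : 1 ≤ N₀ := hρ.2.1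
  set β := N₀ / (N₀ + 1)
  have hβ0 : 0 ≤ β := by positivity
  have hβ1 : β ≤ 1 := div_le_one_of_le₀ (by linarith) (by linarith)
  have hexp : (1 - β) * (σ * (N₀ + 1)) = σ := by simp only [β]; field_simp; ring
  set E' := E * (1 + R)
  have hE' : 1 ≤ E' := one_le_mul_of_one_le_of_one_le hE (by linarith)
  refine ⟨E' ^ (σ * (N₀ + 1)), by positivity, fun c r hr hdist => ?_⟩
  have hρc : ρ c ≤ E' * (1 + r) ^ β :=
    calc ρ c ≤ E * (1 + dist x₀ c) ^ β := hρE c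
      _ ≤ E * ((1 + R) * (1 + r)) ^ β := by gcongr; nlinarith
      _ = E * (1 + R) ^ β * (1 + r) ^ β := by
        rw [Real.mul_rpow (by linarith) (by linarith)]; ring
      _ ≤ E * (1 + R) * (1 + r) ^ β := by
        gcongr; exact Real.rpow_le_self_of_one_le (by linarith : (1:ℝ) ≤ 1 + R) hβ1
  have hbase := rpow_one_sub_div_le_one_add_div (hρ.2.2.1 c) hE' hβ0 hr hρc
  calc (1 + r / ρ c) ^ (-(σ * (N₀ + 1)))
      ≤ ((1 + r) ^ (1 - β) / E') ^ (-(σ * (N₀ + 1))) :=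
        Real.rpow_le_rpow_of_nonpos (by positivity) hbase (by nlinarith)
    _ = E' ^ (σ * (N₀ + 1)) * (1 + r) ^ (-σ) := by
        rw [Real.div_rpow (by positivity) (by linarith), ← Real.rpow_mul (by linarith),
          Real.rpow_neg (by linarith) (σ * (N₀ + 1)), div_inv_eq_mul, mul_neg, hexp, mul_comm]

end CriticalRadius

theorem orliczMaxTheta_indicator_ball_le {d : ℕ} {ρ : Euc d → ℝ} {C₀ N₀ : ℝ}
    (hρ : IsCriticalRadius ρ C₀ N₀) {φ : ℝ → ℝ} (hφ : IsYoung φ) {σ : ℝ} (hσ : 0 ≤ σ)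
    (x₀ : Euc d) {R : ℝ} (hR : 0 ≤ R) :
    ∃ C ≥ 0, ∀ x, orliczMaxTheta ρ (σ * (N₀ + 1)) φ ((ball x₀ R).indicator 1) x ≤
      ENNReal.ofReal (C * (1 + ‖x‖) ^ (-σ)) := by
  set w := (ball x₀ R).indicator (1 : Euc d → ℝ)
  obtain ⟨t, ht, hφt⟩ := hφ.exists_pos_apply_le_one
  obtain ⟨K, hK0, hK⟩ := hρ.exists_one_add_div_rpow_neg_le hσ x₀ hR
  set A := 2 + ‖x₀‖ + R
  refine ⟨K * A ^ σ * t⁻¹, by positivity, fun x =>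
    iSup_le fun c => iSup_le fun r => iSup_le fun hx => ?_⟩
  have hlux : luxAvg φ w c r ≤ t⁻¹ := by
    refine luxAvg_le_of_forall_le_one hφ (inv_pos.2 ht) fun y _ => le_trans ?_ hφt
    have hwy : |w y| ≤ 1 := by by_cases hy : y ∈ ball x₀ R <;> simp [w, hy]
    refine hφ.mono (mem_Ici.2 (by positivity)) (mem_Ici.2 ht.le) ?_
    rw [div_inv_eq_mul]
    nlinarith [abs_nonneg (w y)]
  rcases (ball c r ∩ ball x₀ R).eq_empty_or_nonempty with hdisj | ⟨z, hzc, hzx₀⟩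
  · have hw : EqOn w 0 (ball c r) := fun y hy =>
      indicator_of_notMem (fun hyx₀ => hdisj.subset ⟨hy, hyx₀⟩) _
    simp [luxAvg_eq_zero_of_eqOn_zero hφ.zero hw]
  have hr : 0 ≤ r := (pos_of_mem_ball hx).le
  have hdist : dist x₀ c ≤ R + r := by
    linarith [dist_triangle x₀ z c, mem_ball'.1 hzx₀, mem_ball.1 hzc]
  have hnorm : 1 + ‖x‖ ≤ A * (1 + r) := by
    have := norm_le_norm_add_norm_sub' x x₀
    rw [← dist_eq_norm] at this
    nlinarith [dist_triangle x c x₀, mem_ball.1 hx, dist_comm x₀ c, norm_nonneg x₀]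
  refine ENNReal.ofReal_le_ofReal ?_
  calc (1 + r / ρ c) ^ (-(σ * (N₀ + 1))) * luxAvg φ w c r
      ≤ (K * (1 + r) ^ (-σ)) * t⁻¹ :=
        mul_le_mul (hK c r hr hdist) hlux luxAvg_nonneg (by positivity)
    _ ≤ (K * (A ^ σ * (1 + ‖x‖) ^ (-σ))) * t⁻¹ := by
        gcongr
        exact rpow_neg_le_mul_rpow_neg (by linarith) (by positivity) hnorm hσ
    _ = K * A ^ σ * t⁻¹ * (1 + ‖x‖) ^ (-σ) := by ring

lemma setLIntegral_ofReal_eq_lintegral_mul_indicator {α : Type*} [MeasurableSpace α]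
    {μ : Measure α} {s : Set α} (hs : MeasurableSet s) (g : α → ℝ) :
    ∫⁻ x in s, ENNReal.ofReal (g x) ∂μ = ∫⁻ x, ENNReal.ofReal (g x * s.indicator 1 x) ∂μ := by
  rw [← lintegral_indicator hs]
  congr with x
  by_cases hx : x ∈ s <;> simp [hx]

theorem stmt18_general {d : ℕ} (ρ : Euc d → ℝ) (C₀ N₀ : ℝ)
    (hρ : IsCriticalRadius ρ C₀ N₀) (p : ℝ)
    (φ : ℝ → ℝ) (hφ : IsYoung φ)
    (S : Set (Euc d → ℝ)) (T : (Euc d → ℝ) → Euc d → ℝ)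
    (hT : ∀ θ : ℝ, 0 ≤ θ → ∃ C > (0:ℝ), ∀ w : Euc d → ℝ, IsWeight w → ∀ f ∈ S,
      ∫⁻ x, ENNReal.ofReal (|T f x| ^ p * w x) ≤
        ENNReal.ofReal C *
          ∫⁻ x, ENNReal.ofReal (|f x| ^ p) * orliczMaxTheta ρ θ φ w x) :
    ∀ f ∈ S,
      (∃ σ > (0:ℝ),
        (∫⁻ x : Euc d, ENNReal.ofReal (|f x| ^ p * (1 + ‖x‖) ^ (-σ))) < ⊤) →
      ∀ (x₀ : Euc d) (r : ℝ),
        (∫⁻ x in ball x₀ r, ENNReal.ofReal (|T f x| ^ p)) < ⊤ := by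
  rintro f hf ⟨σ, hσ, hfin⟩ x₀ r
  set R := max r 0
  set w := (ball x₀ R).indicator (1 : Euc d → ℝ)
  obtain ⟨Cw, hCw, hMw⟩ := orliczMaxTheta_indicator_ball_le hρ hφ hσ.le x₀ (le_max_right r 0)
  obtain ⟨C, -, hTw⟩ := hT (σ * (N₀ + 1)) (by nlinarith [hρ.2.1])
  have hdecay : ∀ x, ENNReal.ofReal (|f x| ^ p) * orliczMaxTheta ρ (σ * (N₀ + 1)) φ w x ≤
      ENNReal.ofReal Cw * ENNReal.ofReal (|f x| ^ p * (1 + ‖x‖) ^ (-σ)) := fun x => by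
    grw [hMw x]
    rw [← ENNReal.ofReal_mul (by positivity), ← ENNReal.ofReal_mul hCw, mul_left_comm]
  calc ∫⁻ x in ball x₀ r, ENNReal.ofReal (|T f x| ^ p)
      ≤ ∫⁻ x in ball x₀ R, ENNReal.ofReal (|T f x| ^ p) :=
        lintegral_mono_set (ball_subset_ball (le_max_left r 0))
    _ = ∫⁻ x, ENNReal.ofReal (|T f x| ^ p * w x) :=
        setLIntegral_ofReal_eq_lintegral_mul_indicator measurableSet_ball _
    _ ≤ ENNReal.ofReal C * ∫⁻ x, ENNReal.ofReal (|f x| ^ p) * orliczMaxTheta ρ _ φ w x :=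
        hTw w (isWeight_indicator_one measurableSet_ball) f hf
    _ ≤ ENNReal.ofReal C *
        (ENNReal.ofReal Cw * ∫⁻ x, ENNReal.ofReal (|f x| ^ p * (1 + ‖x‖) ^ (-σ))) := by
        rw [← lintegral_const_mul' (ENNReal.ofReal Cw) _ ENNReal.ofReal_ne_top]
        exact mul_le_mul_right (lintegral_mono hdecay) _
    _ < ⊤ := by finiteness

/-- Theorem 5.3: if `T` satisfies, for every `θ ≥ 0`,
`∫ |Tf|^p w ≤ C ∫ |f|^p M_φ^θ w` for all weights `w` and all `f ∈ S`, then for every `f ∈ S`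
with `∫ |f|^p (1+|x|)^{-σ} < ∞` for some `σ > 0`, `Tf ∈ L^p_loc`. -/
theorem stmt18 {d : ℕ} (hd : 1 ≤ d) (ρ : Euc d → ℝ) (C₀ N₀ : ℝ)
    (hρ : IsCriticalRadius ρ C₀ N₀) (p : ℝ) (hp : 1 ≤ p)
    (φ : ℝ → ℝ) (hφ : IsYoung φ)
    (S : Set (Euc d → ℝ)) (T : (Euc d → ℝ) → Euc d → ℝ)
    (hT : ∀ θ : ℝ, 0 ≤ θ → ∃ C > (0:ℝ), ∀ w : Euc d → ℝ, IsWeight w → ∀ f ∈ S,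
      ∫⁻ x, ENNReal.ofReal (|T f x| ^ p * w x) ≤
        ENNReal.ofReal C *
          ∫⁻ x, ENNReal.ofReal (|f x| ^ p) * orliczMaxTheta ρ θ φ w x) :
    ∀ f ∈ S,
      (∃ σ > (0:ℝ),
        (∫⁻ x : Euc d, ENNReal.ofReal (|f x| ^ p * (1 + ‖x‖) ^ (-σ))) < ⊤) →
      ∀ (x₀ : Euc d) (r : ℝ),
        (∫⁻ x in ball x₀ r, ENNReal.ofReal (|T f x| ^ p)) < ⊤ :=
  stmt18_general ρ C₀ N₀ hρ p φ hφ S T hT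
end
end
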